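/- Let H be an n×n Hermitian complex matrix, let U_1, …, U_N be n×n unitary complex matrices, and let c_1, …, c_N ≥ 0 be nonnegative reals. Define L(ρ) := −i(Hρ − ρH) + Σ_{j=1}^{N} c_j (U_j ρ U_jᴴ − ρ). Then for every n×n Hermitian matrix ρ one has Tr(L(ρ)·ρ) ≤ 0, with equality if and only if U_j ρ U_jᴴ = ρ for every j with c_j > 0. In particular the purity F(ρ) = Tr(ρ²)/2 is a LaSalle function for positive linear combinations of quantum Poisson semigroups with a Hamiltonian term, and the Hamiltonian term contributes zero to the derivative of the purity. -/

import Mathlib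

open Matrix
open scoped ComplexOrder

/-!
Write `D_j = U_j ρ U_jᴴ - ρ`. Conjugation by a unitary preserves `Tr(ρ²)`, which turns
`2 Tr(D_j ρ)` into `-Tr(D_j²)`, and `D_j` is Hermitian, so `Tr(D_j²) = Tr(D_jᴴ D_j) ≥ 0` with
equality only for `D_j = 0`. The commutator term drops out by cyclicity of the trace. Hence
`2 Tr(L(ρ) ρ) = -∑ c_j Tr(D_jᴴ D_j)`, which is `≤ 0` and vanishes exactly when `D_j = 0`
whenever `c_j > 0`.
-/

namespace Matrix

variable {m R : Type*} [Fintype m] [CommRing R]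

theorem trace_commutator_mul_self (H ρ : Matrix m m R) :
    trace ((H * ρ - ρ * H) * ρ) = 0 := by
  rw [sub_mul, trace_sub, trace_mul_cycle H ρ ρ, sub_self]

variable [DecidableEq m]

theorem two_mul_trace_conj_sub_mul_self {U V : Matrix m m R} (hVU : V * U = 1)
    (ρ : Matrix m m R) :
    2 * trace ((U * ρ * V - ρ) * ρ) = -trace ((U * ρ * V - ρ) * (U * ρ * V - ρ)) := by
  have hsq : trace (U * ρ * V * (U * ρ * V)) = trace (ρ * ρ) := by
    rw [show U * ρ * V * (U * ρ * V) = U * (ρ * ρ) * V by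
        simp only [Matrix.mul_assoc, ← Matrix.mul_assoc V, hVU, Matrix.one_mul],
      trace_mul_cycle, hVU, Matrix.one_mul]
  have hcross : trace (ρ * (U * ρ * V)) = trace (U * ρ * V * ρ) := trace_mul_comm _ _
  simp only [sub_mul, mul_sub, trace_sub, hsq, hcross]
  ring

variable [StarRing R]

theorem IsHermitian.two_mul_trace_hamiltonian_add_poisson_mul_self {ι : Type*} [Fintype ι]
    {ρ : Matrix m m R} (hρ : ρ.IsHermitian) (a : R) (H : Matrix m m R)
    {U : ι → Matrix m m R} (hU : ∀ j, (U j)ᴴ * U j = 1) (c : ι → R) :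
    2 * trace ((a • (H * ρ - ρ * H) + ∑ j, c j • (U j * ρ * (U j)ᴴ - ρ)) * ρ) =
      -∑ j, c j * trace ((U j * ρ * (U j)ᴴ - ρ)ᴴ * (U j * ρ * (U j)ᴴ - ρ)) := by
  simp only [add_mul, trace_add, smul_mul, trace_smul, trace_commutator_mul_self, smul_eq_mul,
    mul_zero, zero_add, Matrix.sum_mul, trace_sum, Finset.mul_sum, ← Finset.sum_neg_distrib]
  refine Finset.sum_congr rfl fun j _ => ?_
  rw [mul_left_comm, two_mul_trace_conj_sub_mul_self (hU j),
    ((isHermitian_mul_mul_conjTranspose (U j) hρ).sub hρ).eq, mul_neg]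

end Matrix

theorem Finset.sum_mul_eq_zero_iff_of_nonneg {ι R : Type*} [Semiring R] [PartialOrder R]
    [IsOrderedRing R] [NoZeroDivisors R] {s : Finset ι} {c x : ι → R}
    (hc : ∀ i ∈ s, 0 ≤ c i) (hx : ∀ i ∈ s, 0 ≤ x i) :
    ∑ i ∈ s, c i * x i = 0 ↔ ∀ i ∈ s, 0 < c i → x i = 0 := by
  rw [Finset.sum_eq_zero_iff_of_nonneg fun i hi => mul_nonneg (hc i hi) (hx i hi)]
  refine forall₂_congr fun i hi => ?_
  rw [mul_eq_zero, (hc i hi).lt_iff_ne', or_iff_not_imp_left]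

theorem purity_lasalle_poisson_combination {n N : ℕ}
    (H : Matrix (Fin n) (Fin n) ℂ)
    (U : Fin N → Matrix (Fin n) (Fin n) ℂ) (hU : ∀ j, (U j)ᴴ * U j = 1)
    (c : Fin N → ℝ) (hc : ∀ j, 0 ≤ c j)
    (L : Matrix (Fin n) (Fin n) ℂ → Matrix (Fin n) (Fin n) ℂ)
    (hL : ∀ ρ, L ρ = -Complex.I • (H * ρ - ρ * H)
        + ∑ j, (c j : ℂ) • (U j * ρ * (U j)ᴴ - ρ)) :
    ∀ ρ : Matrix (Fin n) (Fin n) ℂ, ρ.IsHermitian →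
      Matrix.trace (L ρ * ρ) ≤ 0 ∧
      (Matrix.trace (L ρ * ρ) = 0 ↔ ∀ j, 0 < c j → U j * ρ * (U j)ᴴ = ρ) ∧
      Matrix.trace ((-Complex.I • (H * ρ - ρ * H)) * ρ) = 0 := by
  intro ρ hρ
  set D : Fin N → Matrix (Fin n) (Fin n) ℂ := fun j => U j * ρ * (U j)ᴴ - ρ
  have hdiss : 2 * trace (L ρ * ρ) = -∑ j, (c j : ℂ) * trace ((D j)ᴴ * D j) := by
    rw [hL]
    exact hρ.two_mul_trace_hamiltonian_add_poisson_mul_self _ H hU _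
  have hc' : ∀ j ∈ Finset.univ, 0 ≤ (c j : ℂ) := fun j _ => Complex.zero_le_real.2 (hc j)
  have hD : ∀ j ∈ Finset.univ, 0 ≤ trace ((D j)ᴴ * D j) := fun j _ =>
    (posSemidef_conjTranspose_mul_self _).trace_nonneg
  refine ⟨?_, ?_, by rw [smul_mul, trace_smul, trace_commutator_mul_self, smul_zero]⟩
  · refine le_of_mul_le_mul_left ?_ (two_pos : (0 : ℂ) < 2)
    rw [hdiss, mul_zero, neg_nonpos]
    exact Finset.sum_nonneg fun j hj => mul_nonneg (hc' j hj) (hD j hj)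
  · rw [← mul_right_inj' (two_ne_zero : (2 : ℂ) ≠ 0), mul_zero, hdiss, neg_eq_zero,
      Finset.sum_mul_eq_zero_iff_of_nonneg hc' hD]
    simp only [Finset.mem_univ, true_implies, Complex.zero_lt_real,
      trace_conjTranspose_mul_self_eq_zero_iff, D, sub_eq_zero]
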